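/- Let q be a prime power, F_q ⊆ F_{q^N}, let r ≥ 2, let m ≡ k ≡ j (mod r) with 1 ≤ j < r and r < k ≤ m ≤ N, and let g_1, …, g_m ∈ F_{q^N} be linearly independent over F_q. Partition {1, …, m} into ⌊m/r⌋ groups G_1, …, G_{⌊m/r⌋} of size r and one group Ĝ of size j; for each group, let the parity point be the sum of its elements, and set n = m + ⌈m/r⌉. Then for every nonzero linearized polynomial f of q-degree at most k − 1, the codeword consisting of the values of f at the m evaluation points and the ⌈m/r⌉ parity points has Hamming weight at least n − k + 2 − ⌈k/r⌉. Hence in this case too the locally repairable code C^loc has minimum Hamming distance at least n − k + 2 − ⌈k/r⌉ and attains the locality bound d_min ≤ n − k + 2 − ⌈k/r⌉. -/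

import Mathlib

/-!
The map `f x = ∑ aᵢ x^(q^i)` is `F_q`-linear, and its kernel consists of roots of a nonzero
polynomial of degree at most `q^(k-1)`, so `dim ker f ≤ k - 1`. Every position of the code
evaluates `f` at a point `g l` or at a group sum `∑ l ∈ G, g l`. A group whose points all lie in
`ker f` has a zero parity for free; after discarding these closed groups, the zero positions
give linearly independent vectors of `ker f`, because each remaining parity has a member outside
the zero set that detects its coefficient. Hence there are at most `(k - 1) + #closed` zeros.
The closed groups use at most `k - 1` points, and all of them but the short one (of size
`k mod r`) have size `r`, so there are at most `⌊k/r⌋` of them.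
-/

open Polynomial Module Finset Function

section Linearized

variable {K L : Type*} [Field K] [Fintype K] [Field L] [Algebra K L] {k : ℕ}

variable (K) in
def linearizedMap (a : Fin k → L) : L →ₗ[K] L :=
  ∑ i, a i • (FiniteField.frobeniusAlgHom K L ^ (i : ℕ)).toLinearMap

theorem linearizedMap_apply (a : Fin k → L) (x : L) :
    linearizedMap K a x = ∑ i, a i * x ^ Fintype.card K ^ (i : ℕ) := by
  simp [linearizedMap, AlgHom.coe_pow, FiniteField.coe_frobeniusAlgHom, pow_iterate]

noncomputable def linearizedPoly (q : ℕ) (a : Fin k → L) : L[X] := ∑ i, C (a i) * X ^ q ^ (i : ℕ)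

theorem eval_linearizedPoly (q : ℕ) (a : Fin k → L) (x : L) :
    (linearizedPoly q a).eval x = ∑ i, a i * x ^ q ^ (i : ℕ) := by
  simp [linearizedPoly, eval_finsetSum]

theorem coeff_linearizedPoly_pow {q : ℕ} (hq : 1 < q) (a : Fin k → L) (i : Fin k) :
    (linearizedPoly q a).coeff (q ^ (i : ℕ)) = a i := by
  simp [linearizedPoly, coeff_X_pow, (Nat.pow_right_injective hq).eq_iff, Fin.val_inj]

theorem linearizedPoly_ne_zero {q : ℕ} (hq : 1 < q) {a : Fin k → L} (ha : a ≠ 0) :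
    linearizedPoly q a ≠ 0 := by
  obtain ⟨i, hi⟩ := Function.ne_iff.mp ha
  exact fun h => hi (by simpa [h] using (coeff_linearizedPoly_pow hq a i).symm)

theorem natDegree_linearizedPoly_le {q : ℕ} (hq : 0 < q) (a : Fin k → L) :
    (linearizedPoly q a).natDegree ≤ q ^ (k - 1) :=
  natDegree_sum_le_of_forall_le _ _ fun i _ =>
    (natDegree_C_mul_X_pow_le _ _).trans (Nat.pow_le_pow_right hq (by omega))

theorem eval_linearizedPoly_card (a : Fin k → L) (x : L) :
    (linearizedPoly (Fintype.card K) a).eval x = linearizedMap K a x := by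
  rw [eval_linearizedPoly, linearizedMap_apply]

theorem coe_ker_linearizedMap_subset_roots [DecidableEq L] {a : Fin k → L} (ha : a ≠ 0) :
    (LinearMap.ker (linearizedMap K a) : Set L) ⊆
      (linearizedPoly (Fintype.card K) a).roots.toFinset := by
  intro x hx
  simpa [linearizedPoly_ne_zero Fintype.one_lt_card ha, eval_linearizedPoly_card] using hx

theorem finite_ker_linearizedMap {a : Fin k → L} (ha : a ≠ 0) :
    Finite (LinearMap.ker (linearizedMap K a)) := by
  classical
  exact (Finset.finite_toSet _ |>.subset (coe_ker_linearizedMap_subset_roots ha)).to_subtype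

theorem finrank_ker_linearizedMap_le {a : Fin k → L} (ha : a ≠ 0) :
    finrank K (LinearMap.ker (linearizedMap K a)) ≤ k - 1 := by
  classical
  have := finite_ker_linearizedMap (K := K) ha
  set P := linearizedPoly (Fintype.card K) a
  refine (Nat.pow_le_pow_iff_right (Fintype.one_lt_card (α := K))).mp ?_
  calc Fintype.card K ^ finrank K (LinearMap.ker (linearizedMap K a))
      = Nat.card (LinearMap.ker (linearizedMap K a)) := by
        rw [Module.natCard_eq_pow_finrank (K := K), Nat.card_eq_fintype_card]
    _ ≤ Nat.card (P.roots.toFinset : Set L) :=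
        Nat.card_mono (Finset.finite_toSet _) (coe_ker_linearizedMap_subset_roots ha)
    _ = #P.roots.toFinset := Nat.card_coe_set_eq _ |>.trans (by simp)
    _ ≤ P.natDegree := (Multiset.toFinset_card_le _).trans (card_roots' _)
    _ ≤ Fintype.card K ^ (k - 1) := natDegree_linearizedPoly_le Fintype.card_pos a

end Linearized

section GroupSums

variable {K V α ι : Type*} [Field K] [AddCommGroup V] [Module K V]

def withGroupSums (g : α → V) (H : ι → Finset α) : α ⊕ ι → V :=
  Sum.elim g fun i => ∑ l ∈ H i, g l

theorem comp_withGroupSums {W : Type*} [AddCommGroup W] [Module K W] (f : V →ₗ[K] W)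
    (g : α → V) (H : ι → Finset α) : f ∘ withGroupSums g H = withGroupSums (f ∘ g) H := by
  ext (l | i) <;> simp [withGroupSums]

theorem linearIndepOn_withGroupSums_single [DecidableEq α] {H : ι → Finset α}
    (hH : Pairwise (Disjoint on H)) {Y : Finset (α ⊕ ι)}
    (hY : ∀ i, .inr i ∈ Y → ∃ l ∈ H i, .inl l ∉ Y) :
    LinearIndepOn K (withGroupSums (fun l => Pi.single l (1 : K)) H) Y := by
  rw [linearIndepOn_finset_iff]
  intro c hc
  have heval (w : α) : ∑ x ∈ Y, c x * withGroupSums (fun l => Pi.single l (1 : K)) H x w = 0 := by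
    simpa using congrFun hc w
  have hpar : ∀ i, .inr i ∈ Y → c (.inr i) = 0 := by
    intro i hi
    obtain ⟨w, hwH, hwY⟩ := hY i hi
    rw [← heval w, Finset.sum_eq_single (.inr i)]
    · simp [withGroupSums, hwH]
    · rintro (l | i') hx hne
      · simp [withGroupSums, show l ≠ w by rintro rfl; exact hwY hx]
      · have hi' : i' ≠ i := fun h => hne (h ▸ rfl)
        simp [withGroupSums, Finset.disjoint_left.mp (hH hi'.symm) hwH]
    · exact fun h => absurd hi h
  have hpt : ∀ l, .inl l ∈ Y → c (.inl l) = 0 := by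
    intro l hl
    rw [← heval l, Finset.sum_eq_single (.inl l)]
    · simp [withGroupSums]
    · rintro (l' | i) hx hne
      · simp [withGroupSums, show l ≠ l' by rintro rfl; exact hne rfl]
      · simp [hpar i hx]
    · exact fun h => absurd hl h
  rintro (l | i) hx
  exacts [hpt l hx, hpar i hx]

theorem linearIndepOn_withGroupSums [Fintype α] {g : α → V} (hg : LinearIndependent K g)
    {H : ι → Finset α} (hH : Pairwise (Disjoint on H)) {Y : Finset (α ⊕ ι)}
    (hY : ∀ i, .inr i ∈ Y → ∃ l ∈ H i, .inl l ∉ Y) :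
    LinearIndepOn K (withGroupSums g H) Y := by
  classical
  have hsingle : (Fintype.linearCombination K g) ∘ (fun l => Pi.single l (1 : K)) = g := by
    ext l; simp [Fintype.linearCombination_apply_single]
  have := (linearIndepOn_withGroupSums_single (K := K) hH hY).map_injOn
    (Fintype.linearCombination K g) hg.fintypeLinearCombination_injective.injOn
  rwa [comp_withGroupSums, hsingle] at this

theorem LinearIndepOn.card_le_finrank_of_forall_mem {v : α → V} {Y : Finset α}
    (hv : LinearIndepOn K v Y) {U : Submodule K V} [Module.Finite K U] (hU : ∀ x ∈ Y, v x ∈ U) :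
    #Y ≤ finrank K U := by
  have : LinearIndependent K fun x : Y => (⟨v x, hU x x.2⟩ : U) := .of_comp U.subtype hv
  simpa using this.fintype_card_le_finrank

variable [Fintype α] [Fintype ι] {g : α → V} (hg : LinearIndependent K g)
  {H : ι → Finset α} (hH : Pairwise (Disjoint on H))
  (U : Submodule K V) [DecidablePred (· ∈ U)] [Module.Finite K U]
include hg hH

theorem card_filter_withGroupSums_mem_le :
    #{x | withGroupSums g H x ∈ U} ≤ finrank K U + #{i | ∀ l ∈ H i, g l ∈ U} := by
  have := Classical.decEq (α ⊕ ι)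
  set B : Finset ι := {i | ∀ l ∈ H i, g l ∈ U}
  set Z : Finset (α ⊕ ι) := {x | withGroupSums g H x ∈ U}
  have hZ (x) : x ∈ Z ↔ withGroupSums g H x ∈ U := by simp [Z]
  have hB (i) : i ∈ B ↔ ∀ l ∈ H i, g l ∈ U := by simp [B]
  have hBZ : B.map .inr ⊆ Z := by
    intro x hx
    obtain ⟨i, hi, rfl⟩ := mem_map.mp hx
    exact (hZ _).mpr (U.sum_mem ((hB i).mp hi))
  have hindep : LinearIndepOn K (withGroupSums g H) ↑(Z \ B.map .inr) := by
    refine linearIndepOn_withGroupSums hg hH fun i hi => ?_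
    have hiB : i ∉ B := fun h => (mem_sdiff.mp hi).2 (mem_map_of_mem _ h)
    obtain ⟨l, hl, hlU⟩ := not_forall₂.mp (mt (hB i).mpr hiB)
    exact ⟨l, hl, fun h => hlU ((hZ _).mp (mem_sdiff.mp h).1)⟩
  calc #Z = #(Z \ B.map .inr) + #B := by
        rw [card_sdiff_of_subset hBZ, card_map, Nat.sub_add_cancel (card_map _ ▸ card_le_card hBZ)]
    _ ≤ finrank K U + #B := by
        gcongr
        exact hindep.card_le_finrank_of_forall_mem fun x hx => (hZ x).mp (mem_sdiff.mp hx).1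

theorem sum_card_filter_forall_mem_le_finrank :
    ∑ i with ∀ l ∈ H i, g l ∈ U, #(H i) ≤ finrank K U := by
  have := Classical.decEq α
  rw [← card_biUnion fun i _ j _ hij => hH hij]
  calc _ ≤ #({l | g l ∈ U} : Finset α) :=
        card_le_card <| biUnion_subset.mpr fun i hi l hl => by
          simp only [mem_filter, mem_univ, true_and] at hi ⊢; exact hi l hl
    _ ≤ finrank K U :=
        (hg.linearIndepOn _).card_le_finrank_of_forall_mem fun l hl => (mem_filter.mp hl).2

end GroupSums

theorem card_le_div_of_sum_lt {ι : Type*} {B : Finset ι} {s : ι → ℕ} {r k : ℕ}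
    (hr : 0 < r) (i₀ : ι) (hs : ∀ i ≠ i₀, r ≤ s i) (hi₀ : k % r ≤ s i₀)
    (hsum : ∑ i ∈ B, s i < k) : #B ≤ k / r := by
  classical
  have hk := Nat.div_add_mod k r
  have hmod := Nat.mod_lt k hr
  have hpt : ∀ i ∈ B, r ≤ s i + if i = i₀ then r - k % r else 0 := by
    intro i _
    split_ifs with h
    · subst h; omega
    · simpa using hs i h
  have : r * #B < r * (k / r + 1) :=
    calc r * #B = ∑ i ∈ B, r := by rw [sum_const, smul_eq_mul, mul_comm]
      _ ≤ ∑ i ∈ B, (s i + if i = i₀ then r - k % r else 0) := sum_le_sum hpt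
      _ = ∑ i ∈ B, s i + if i₀ ∈ B then r - k % r else 0 := by rw [sum_add_distrib, sum_ite_eq']
      _ ≤ ∑ i ∈ B, s i + (r - k % r) := by gcongr; split_ifs <;> simp
      _ < r * (k / r + 1) := by rw [mul_add, mul_one]; omega
  exact Nat.lt_succ_iff.mp (Nat.lt_of_mul_lt_mul_left this)

theorem add_sub_one_div_eq_div_add_one {k r : ℕ} (hr : 0 < r) (hk : k % r ≠ 0) :
    (k + r - 1) / r = k / r + 1 := by
  have hdiv := Nat.div_add_mod k r
  have hmod := Nat.mod_lt k hr
  calc (k + r - 1) / r = (k % r - 1 + r + r * (k / r)) / r := by congr 1; omega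
    _ = (k % r - 1 + r) / r + k / r := Nat.add_mul_div_left _ _ hr
    _ = k / r + 1 := by rw [Nat.div_eq_of_lt_le (k := 1) (by omega) (by omega), add_comm]

theorem LinearMap.natCard_apply_ne_zero {K V W ι : Type*} [Field K] [AddCommGroup V]
    [Module K V] [AddCommGroup W] [Module K W] [Fintype ι] (f : V →ₗ[K] W) (P : ι → V)
    [DecidablePred (· ∈ LinearMap.ker f)] :
    Nat.card {x // f (P x) ≠ 0} = Fintype.card ι - #{x | P x ∈ LinearMap.ker f} := by
  classical
  rw [Nat.card_eq_fintype_card, Fintype.card_subtype_compl, Fintype.card_subtype]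
  simp only [LinearMap.mem_ker]

theorem locally_repairable_code_optimal_distance_remainder_case_general
    (q m r k j : ℕ)
    (hj1 : 1 ≤ j) (hjr : j < r) (hkj : k % r = j)
    (hkm : k ≤ m)
    (Fq FqN : Type) [Field Fq] [Field FqN] [Algebra Fq FqN]
    [Fintype Fq]
    (hcard : Fintype.card Fq = q)
    (g : Fin m → FqN) (hg : LinearIndependent Fq g)
    (G : Fin (m / r) → Finset (Fin m)) (Ghat : Finset (Fin m))
    (hGcard : ∀ i, (G i).card = r) (hGhatcard : Ghat.card = j)
    (hdisj : ∀ i i' : Fin (m / r), i ≠ i' → Disjoint (G i) (G i'))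
    (hdisjhat : ∀ i : Fin (m / r), Disjoint (G i) Ghat)
    (a : Fin k → FqN) (ha : a ≠ 0)
    (c : (Fin m ⊕ (Fin (m / r) ⊕ Unit)) → FqN)
    (hc : c = Sum.elim (fun l : Fin m => ∑ i : Fin k, a i * g l ^ q ^ (i : ℕ))
      (Sum.elim
        (fun i' : Fin (m / r) => ∑ i : Fin k, a i * (∑ l ∈ G i', g l) ^ q ^ (i : ℕ))
        (fun _ : Unit => ∑ i : Fin k, a i * (∑ l ∈ Ghat, g l) ^ q ^ (i : ℕ)))) :
    (m + (m / r + 1)) - k + 2 - (k + r - 1) / r ≤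
      Nat.card {x : Fin m ⊕ (Fin (m / r) ⊕ Unit) // c x ≠ 0} := by
  classical
  subst hcard
  set φ := linearizedMap Fq a
  set H : Fin (m / r) ⊕ Unit → Finset (Fin m) := Sum.elim G fun _ => Ghat
  have hH : Pairwise (Disjoint on H) := by
    rintro (i | ⟨⟩) (i' | ⟨⟩) hne
    exacts [hdisj i i' (by simpa using hne), hdisjhat i, (hdisjhat i').symm, absurd rfl hne]
  have hφ : c = fun x => φ (withGroupSums g H x) := by
    ext (l | i | ⟨⟩) <;> simp only [hc, φ, H, withGroupSums, Sum.elim_inl, Sum.elim_inr,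
      linearizedMap_apply]
  have := finite_ker_linearizedMap (K := Fq) ha
  have hk : 0 < k := Nat.pos_of_ne_zero fun h => by simp [h] at hkj; omega
  have hB := card_le_div_of_sum_lt (s := fun i => #(H i)) (r := r) (k := k) (by omega) (.inr ())
    (by rintro (i | ⟨⟩) hi; exacts [(hGcard i).ge, absurd rfl hi])
    (by simp only [H, Sum.elim_inr, hGhatcard, hkj, le_refl])
    ((sum_card_filter_forall_mem_le_finrank hg hH _).trans_lt
      ((finrank_ker_linearizedMap_le ha).trans_lt (by omega)))
  have hZ := (card_filter_withGroupSums_mem_le hg hH (LinearMap.ker φ)).trans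
    (add_le_add (finrank_ker_linearizedMap_le ha) hB)
  rw [hφ, LinearMap.natCard_apply_ne_zero, add_sub_one_div_eq_div_add_one (by omega) (by omega)]
  simp only [Fintype.card_sum, Fintype.card_fin, Fintype.card_unit]
  refine le_trans ?_ (Nat.sub_le_sub_left hZ _)
  generalize m / r = t, k / r = d
  omega

/-- Minimum distance of the locally repairable code `C^loc`
(case `m ≡ k ≡ j (mod r)`, `1 ≤ j < r`). With `r ≥ 2`, `r < k ≤ m ≤ N`, `F_q`-linearly
independent evaluation points `g_1, …, g_m ∈ F_{q^N}`, a partition of `{1, …, m}` into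
`⌊m/r⌋` groups `G_i` of size `r` and one group `Ĝ` of size `j`, and a parity point for each
group equal to the sum of its elements (so `n = m + ⌈m/r⌉` points in total), every codeword
of a nonzero linearized polynomial `f` of q-degree at most `k - 1` has Hamming weight at
least `n - k + 2 - ⌈k/r⌉`. Hence `C^loc` attains the locality bound
`d_min ≤ n - k + 2 - ⌈k/r⌉`. (Here `⌈k/r⌉ = (k + r - 1) / r` and, since `r ∤ m`,
`⌈m/r⌉ = m/r + 1` in natural-number arithmetic.) -/
theorem locally_repairable_code_optimal_distance_remainder_case
    (q N m r k j : ℕ) (hq : ∃ p e : ℕ, p.Prime ∧ 0 < e ∧ q = p ^ e)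
    (hr : 2 ≤ r) (hj1 : 1 ≤ j) (hjr : j < r) (hmj : m % r = j) (hkj : k % r = j)
    (hrk : r < k) (hkm : k ≤ m) (hmN : m ≤ N)
    (Fq FqN : Type) [Field Fq] [Field FqN] [Algebra Fq FqN]
    [Fintype Fq] [Fintype FqN]
    (hcard : Fintype.card Fq = q) (hcardN : Fintype.card FqN = q ^ N)
    (g : Fin m → FqN) (hg : LinearIndependent Fq g)
    (G : Fin (m / r) → Finset (Fin m)) (Ghat : Finset (Fin m))
    (hGcard : ∀ i, (G i).card = r) (hGhatcard : Ghat.card = j)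
    (hdisj : ∀ i i' : Fin (m / r), i ≠ i' → Disjoint (G i) (G i'))
    (hdisjhat : ∀ i : Fin (m / r), Disjoint (G i) Ghat)
    (hcover : Finset.univ.biUnion G ∪ Ghat = (Finset.univ : Finset (Fin m)))
    (a : Fin k → FqN) (ha : a ≠ 0)
    (c : (Fin m ⊕ (Fin (m / r) ⊕ Unit)) → FqN)
    (hc : c = Sum.elim (fun l : Fin m => ∑ i : Fin k, a i * g l ^ q ^ (i : ℕ))
      (Sum.elim
        (fun i' : Fin (m / r) => ∑ i : Fin k, a i * (∑ l ∈ G i', g l) ^ q ^ (i : ℕ))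
        (fun _ : Unit => ∑ i : Fin k, a i * (∑ l ∈ Ghat, g l) ^ q ^ (i : ℕ)))) :
    (m + (m / r + 1)) - k + 2 - (k + r - 1) / r ≤
      Nat.card {x : Fin m ⊕ (Fin (m / r) ⊕ Unit) // c x ≠ 0} :=
  locally_repairable_code_optimal_distance_remainder_case_general q m r k j hj1 hjr hkj hkm Fq FqN
    hcard g hg G Ghat hGcard hGhatcard hdisj hdisjhat a ha c hc
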